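/- arXiv:1804.03819 — 8 statements merged into one kernel-verified Lean document; each statement's English description precedes it below -/
import Mathlib

section
/- Let n ≥ 1 be an integer and N = 2^n. Let d and t be integers with 1 ≤ d ≤ N, and let M be a t × N binary matrix such that any d distinct columns of M contain a d × d identity matrix. Then for every set D ⊆ {1,…,N} with |D| ≤ d and every index j ∈ {1,…,N}: j ∈ D if and only if there exists a row index i ∈ {1,…,t} such that the coordinatewise OR of the columns {𝒮_{j'} : j' ∈ D and M(i,j') = 1} equals the column 𝒮_j. (This is the correctness of decoding the tensor-product measurement matrix T = M ⊛ 𝒮 for up to d defective items, with ε = 0.) -/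
/-- The `2n × 2^n` measurement matrix `𝒮`: the column indexed by `j : Fin (2^n)`
(i.e. the `(j+1)`-st column) consists of the `n`-bit binary representation of the
integer `j` followed by its bitwise complement. -/
def Smat (n : ℕ) (i : Fin (2 * n)) (j : Fin (2 ^ n)) : Bool :=
  if (i : ℕ) < n then (j : ℕ).testBit (i : ℕ) else !((j : ℕ).testBit ((i : ℕ) - n))

lemma smat_sep (n : ℕ) {j j' : Fin (2 ^ n)} (h : j' ≠ j) :
    ∃ row : Fin (2 * n), Smat n row j' = true ∧ Smat n row j = false := by
  have hval : (j' : ℕ) ≠ (j : ℕ) := fun he => h (Fin.ext he)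
  have hex : ∃ k, (j' : ℕ).testBit k ≠ (j : ℕ).testBit k := by
    by_contra hc
    push_neg at hc
    exact hval (Nat.eq_of_testBit_eq hc)
  obtain ⟨k, hk⟩ := hex
  have hkn : k < n := by
    by_contra hkn
    push_neg at hkn
    have hle : (2 : ℕ) ^ n ≤ 2 ^ k := Nat.pow_le_pow_right (by norm_num) hkn
    have h1 : (j' : ℕ).testBit k = false :=
      Nat.testBit_eq_false_of_lt (lt_of_lt_of_le j'.isLt hle)
    have h2 : (j : ℕ).testBit k = false :=
      Nat.testBit_eq_false_of_lt (lt_of_lt_of_le j.isLt hle)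
    exact hk (h1.trans h2.symm)
  cases hb : (j' : ℕ).testBit k with
  | false =>
    have hbj : (j : ℕ).testBit k = true := by
      cases hbj : (j : ℕ).testBit k with
      | false => exact absurd (hb.trans hbj.symm) hk
      | true => rfl
    refine ⟨⟨n + k, by omega⟩, ?_, ?_⟩ <;>
      simp [Smat, Nat.add_sub_cancel_left, hb, hbj]
  | true =>
    have hbj : (j : ℕ).testBit k = false := by
      cases hbj : (j : ℕ).testBit k with
      | false => rfl
      | true => exact absurd (hb.trans hbj.symm) hk
    exact ⟨⟨k, by omega⟩, by simp [Smat, hkn, hb], by simp [Smat, hkn, hbj]⟩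

lemma smat_nonzero (n : ℕ) (hn : 1 ≤ n) (j : Fin (2 ^ n)) :
    ∃ row : Fin (2 * n), Smat n row j = true := by
  cases hb : (j : ℕ).testBit 0 with
  | true =>
    have h0 : 0 < n := hn
    exact ⟨⟨0, by omega⟩, by simp [Smat, h0, hb]⟩
  | false =>
    refine ⟨⟨n, by omega⟩, ?_⟩
    simp [Smat, hb]

/-- Let `N = 2^n`, `1 ≤ d ≤ N`, and let `M` be a `t × N` binary matrix
such that any `d` distinct columns of `M` contain a `d × d` identity matrix. Then for
every set `D` of at most `d` column indices and every index `j`: `j ∈ D` iff there is a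
row `i` of `M` such that the coordinatewise OR of the columns `𝒮_{j'}` over those
`j' ∈ D` with `M i j' = 1` equals the column `𝒮_j`. -/
theorem stmt0 (n : ℕ) (hn : 1 ≤ n) (d t : ℕ) (hd1 : 1 ≤ d) (hd2 : d ≤ 2 ^ n)
    (ht : 1 ≤ t) (M : Fin t → Fin (2 ^ n) → Bool)
    (hM : ∀ c : Fin d → Fin (2 ^ n), Function.Injective c →
      ∃ i : Fin d → Fin t, ∀ a : Fin d, M (i a) (c a) = true ∧
        ∀ b : Fin d, b ≠ a → M (i b) (c a) = false)
    (D : Finset (Fin (2 ^ n))) (hD : D.card ≤ d) (j : Fin (2 ^ n)) :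
    j ∈ D ↔ ∃ i : Fin t, ∀ row : Fin (2 * n),
      ((∃ j' ∈ D, M i j' = true ∧ Smat n row j' = true) ↔ Smat n row j = true) := by
  constructor
  · intro hj
    obtain ⟨E, hDE, hEcard⟩ := Finset.exists_superset_card_eq hD
      (by simpa using hd2)
    set c : Fin d → Fin (2 ^ n) := fun a => (E.orderIsoOfFin hEcard a : Fin (2 ^ n))
      with hc
    have hcinj : Function.Injective c := fun a b hab =>
      (E.orderIsoOfFin hEcard).injective (Subtype.ext hab)
    obtain ⟨i, hi⟩ := hM c hcinj
    obtain ⟨a, ha⟩ := (E.orderIsoOfFin hEcard).surjective ⟨j, hDE hj⟩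
    have hca : c a = j := by rw [hc]; exact congrArg Subtype.val ha
    refine ⟨i a, fun row => ⟨?_, ?_⟩⟩
    · rintro ⟨j', hj'D, hMj', hS⟩
      obtain ⟨b, hb⟩ := (E.orderIsoOfFin hEcard).surjective ⟨j', hDE hj'D⟩
      have hcb : c b = j' := by rw [hc]; exact congrArg Subtype.val hb
      have hba : b = a := by
        by_contra hba
        have : M (i a) (c b) = false := (hi b).2 a (fun h => hba h.symm)
        rw [hcb, hMj'] at this
        simp at this
      rw [← hcb, hba, hca] at hS
      exact hS
    · intro hS
      exact ⟨j, hj, by rw [← hca]; exact (hi a).1, hS⟩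
  · rintro ⟨i, hi⟩
    obtain ⟨row, hrow⟩ := smat_nonzero n hn j
    obtain ⟨j', hj'D, hMj', hS⟩ := (hi row).mpr hrow
    have hjj : j' = j := by
      by_contra hne
      obtain ⟨row2, h1, h2⟩ := smat_sep n hne
      have := (hi row2).mp ⟨j', hj'D, hMj', h1⟩
      rw [this] at h2
      simp at h2
    exact hjj ▸ hj'D
end

section
/- Let n ≥ 1 be an integer and N = 2^n. Then for every set D ⊆ {1,…,N} with |D| ≤ 2 and every index j ∈ {1,…,N}: j ∈ D if and only if there exists a row index i ∈ {1,…,2n} such that the coordinatewise OR of the columns {𝒮_{j'} : j' ∈ D and 𝒮(i,j') = 1} equals the column 𝒮_j. (This is the correctness of the nonrandom 4(log₂N)² × N measurement matrix T = 𝒮 ⊛ 𝒮 for identifying up to two defective items.) -/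
private lemma testBit_eq_of_low {n : ℕ} {a b : Fin (2 ^ n)}
    (h : ∀ p, p < n → (a : ℕ).testBit p = (b : ℕ).testBit p) : a = b := by
  apply Fin.ext
  apply Nat.eq_of_testBit_eq
  intro p
  by_cases hp : p < n
  · exact h p hp
  · have ha : (a : ℕ) < 2 ^ p :=
      lt_of_lt_of_le a.isLt (Nat.pow_le_pow_right (by norm_num) (le_of_not_gt hp))
    have hb : (b : ℕ) < 2 ^ p :=
      lt_of_lt_of_le b.isLt (Nat.pow_le_pow_right (by norm_num) (le_of_not_gt hp))
    rw [Nat.testBit_lt_two_pow ha, Nat.testBit_lt_two_pow hb]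

private lemma smat_low {n p : ℕ} (hp : p < n) {hpn : p < 2 * n} (x : Fin (2 ^ n)) :
    Smat n ⟨p, hpn⟩ x = (x : ℕ).testBit p := by
  simp [Smat, hp]

private lemma smat_high {n p : ℕ} {hpn : p + n < 2 * n} (x : Fin (2 ^ n)) :
    Smat n ⟨p + n, hpn⟩ x = !((x : ℕ).testBit p) := by
  simp [Smat, Nat.add_sub_cancel]

private lemma exists_true (n : ℕ) (hn : 1 ≤ n) (j : Fin (2 ^ n)) :
    ∃ i : Fin (2 * n), Smat n i j = true := by
  by_cases h : (j : ℕ).testBit 0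
  · exact ⟨⟨0, by omega⟩, by rw [smat_low hn]; exact h⟩
  · exact ⟨⟨0 + n, by omega⟩, by rw [smat_high]; simp [h]⟩

private lemma exists_sep {n : ℕ} {a b : Fin (2 ^ n)} (hab : a ≠ b) :
    ∃ i : Fin (2 * n), Smat n i a = true ∧ Smat n i b = false := by
  have hex : ∃ p, p < n ∧ (a : ℕ).testBit p ≠ (b : ℕ).testBit p := by
    by_contra h
    push_neg at h
    exact hab (testBit_eq_of_low fun p hp => h p hp)
  obtain ⟨p, hp, hne⟩ := hex
  by_cases ha : (a : ℕ).testBit p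
  · have hb : (b : ℕ).testBit p = false := by
      revert hne ha; cases (b : ℕ).testBit p <;> cases (a : ℕ).testBit p <;> simp
    refine ⟨⟨p, by omega⟩, ?_, ?_⟩ <;> simp [Smat, hp, ha, hb]
  · have ha' : (a : ℕ).testBit p = false := by simpa using ha
    have hb : (b : ℕ).testBit p = true := by
      revert hne ha'; cases (b : ℕ).testBit p <;> cases (a : ℕ).testBit p <;> simp
    refine ⟨⟨p + n, by omega⟩, ?_, ?_⟩ <;>
      simp [Smat, Nat.add_sub_cancel, ha', hb]

private lemma mem_pair_of_card_le_two {α : Type*} [DecidableEq α] {D : Finset α}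
    (hD : D.card ≤ 2) {a b x : α} (ha : a ∈ D) (hb : b ∈ D) (hab : a ≠ b) (hx : x ∈ D) :
    x = a ∨ x = b := by
  by_contra h
  push_neg at h
  obtain ⟨h1, h2⟩ := h
  have hsub : ({a, b, x} : Finset α) ⊆ D := by
    intro y hy
    simp only [Finset.mem_insert, Finset.mem_singleton] at hy
    rcases hy with rfl | rfl | rfl <;> assumption
  have h3 : ({a, b, x} : Finset α).card = 3 := by
    rw [Finset.card_insert_of_notMem (by simp [hab, Ne.symm h1]),
      Finset.card_insert_of_notMem (by simp [Ne.symm h2]), Finset.card_singleton]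
  have := Finset.card_le_card hsub
  omega

/-- Let `N = 2^n`. For every set `D` of at most two column indices and
every index `j`: `j ∈ D` iff there is a row `i ∈ {1,…,2n}` such that the coordinatewise
OR of the columns `𝒮_{j'}` over those `j' ∈ D` with `𝒮 i j' = 1` equals the column
`𝒮_j`.  (Correctness of the nonrandom `4 (log₂ N)² × N` matrix `T = 𝒮 ⊛ 𝒮` for
identifying up to two defective items.) -/
theorem stmt1 (n : ℕ) (hn : 1 ≤ n) (D : Finset (Fin (2 ^ n))) (hD : D.card ≤ 2)
    (j : Fin (2 ^ n)) :
    j ∈ D ↔ ∃ i : Fin (2 * n), ∀ row : Fin (2 * n),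
      ((∃ j' ∈ D, Smat n i j' = true ∧ Smat n row j' = true) ↔ Smat n row j = true) := by
  constructor
  · intro hj
    have hkey : ∃ i : Fin (2 * n), Smat n i j = true ∧
        ∀ j' ∈ D, j' ≠ j → Smat n i j' = false := by
      by_cases hex : ∃ k ∈ D, k ≠ j
      · obtain ⟨k, hk, hkj⟩ := hex
        obtain ⟨i, hi1, hi2⟩ := exists_sep (Ne.symm hkj)
        refine ⟨i, hi1, ?_⟩
        intro j' hj' hne
        have hjk : j' = k := by
          rcases mem_pair_of_card_le_two hD hj hk (Ne.symm hkj) hj' with h | h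
          · exact absurd h hne
          · exact h
        subst hjk
        exact hi2
      · push_neg at hex
        obtain ⟨i, hi⟩ := exists_true n hn j
        exact ⟨i, hi, fun j' hj' hne => absurd (hex j' hj') hne⟩
    obtain ⟨i, hij, hsep⟩ := hkey
    refine ⟨i, fun row => ?_⟩
    constructor
    · rintro ⟨j', hj', hij', hrow⟩
      rcases eq_or_ne j' j with rfl | hne
      · exact hrow
      · rw [hsep j' hj' hne] at hij'
        exact absurd hij' (by simp)
    · intro hrow
      exact ⟨j, hj, hij, hrow⟩
  · rintro ⟨i, hi⟩
    by_contra hjD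
    have hTa : ∃ a ∈ D, Smat n i a = true := by
      by_contra h
      push_neg at h
      obtain ⟨r, hr⟩ := exists_true n hn j
      obtain ⟨j', hj', h1, _⟩ := (hi r).mpr hr
      exact absurd h1 (by simp [h j' hj'])
    obtain ⟨a, haD, hia⟩ := hTa
    by_cases hb : ∃ b ∈ D, b ≠ a ∧ Smat n i b = true
    · obtain ⟨b, hbD, hba, hib⟩ := hb
      have hcols : ∀ row : Fin (2 * n),
          (Smat n row j = true ↔ (Smat n row a = true ∨ Smat n row b = true)) := by
        intro row
        constructor
        · intro hr
          obtain ⟨j', hj', _, h2⟩ := (hi row).mpr hr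
          rcases mem_pair_of_card_le_two hD haD hbD (Ne.symm hba) hj' with rfl | rfl
          · exact Or.inl h2
          · exact Or.inr h2
        · rintro (h | h)
          · exact (hi row).mp ⟨a, haD, hia, h⟩
          · exact (hi row).mp ⟨b, hbD, hib, h⟩
      have hab : a = b := by
        apply testBit_eq_of_low
        intro p hp
        have hlow := hcols ⟨p, by omega⟩
        have hhigh := hcols ⟨p + n, by omega⟩
        simp only [smat_low hp, smat_high] at hlow hhigh
        revert hlow hhigh
        cases (a : ℕ).testBit p <;> cases (b : ℕ).testBit p <;>
          cases (j : ℕ).testBit p <;> simp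
      exact hba (hab.symm)
    · push_neg at hb
      have honly : ∀ j' ∈ D, Smat n i j' = true → j' = a := by
        intro j' hj' h
        by_contra hne
        exact absurd h (by simp [hb j' hj' hne])
      have hcols : ∀ row : Fin (2 * n), Smat n row a = true ↔ Smat n row j = true := by
        intro row
        constructor
        · intro h
          exact (hi row).mp ⟨a, haD, hia, h⟩
        · intro h
          obtain ⟨j', hj', h1, h2⟩ := (hi row).mpr h
          rwa [honly j' hj' h1] at h2
      have haj : a = j := by
        apply testBit_eq_of_low
        intro p hp
        have hlow := hcols ⟨p, by omega⟩
        simp only [smat_low hp] at hlow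
        revert hlow
        cases (a : ℕ).testBit p <;> cases (j : ℕ).testBit p <;> simp
      exact hjD (haj ▸ haD)
end

section
/- Let d ≥ 1 and N ≥ 2 be integers and let q be a power of two satisfying q ≥ d + 2, q ≥ 8, and (q/2)·ln(q/2) ≥ (d·ln N)/2. Then there exists a d-disjunct binary matrix with q(q−1) rows and N columns. -/
/-- A `t × N` binary matrix `M` is `d`-disjunct if for every column index `j` and every
set `T` of at most `d` column indices with `j ∉ T`, there is a row `i` with `M i j = 1`
and `M i j' = 0` for all `j' ∈ T`. -/
def Disjunct {t N : ℕ} (d : ℕ) (M : Fin t → Fin N → Bool) : Prop :=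
  ∀ j : Fin N, ∀ T : Finset (Fin N), T.card ≤ d → j ∉ T →
    ∃ i : Fin t, M i j = true ∧ ∀ j' ∈ T, M i j' = false

/-!
Kautz–Singleton: concatenate a Reed–Solomon code with the identity code. Column `j` is a
polynomial `p_j` of degree `< m` over `𝔽_q`, and row `(s, a)` records whether `p_j(v_s) = a`
at the `s`-th of `t` distinct evaluation points. Two distinct codewords agree in at most `m - 1`
positions, so `d` other columns cover at most `d (m - 1) < t` positions of column `j`, and a free
position `s` gives the separating row `(s, p_j(v_s))`. With `m = ⌊(q - 2)/d⌋ + 1` and `t = q - 1`,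
the logarithmic hypothesis (together with `2 log₂ q ≤ q`) gives `N ≤ q^m`, so there are enough
polynomials for the `N` columns.
-/

open Finset Polynomial Real

section KautzSingleton

variable {σ α : Type*} [Fintype σ] [DecidableEq α]

lemma exists_forall_ne_of_card_agree_le {ι : Type*} {c : ι → σ → α} {d D : ℕ}
    (hagree : ∀ j j', j ≠ j' → #{s | c j s = c j' s} ≤ D) (hdD : d * D < Fintype.card σ)
    {j : ι} {T : Finset ι} (hT : #T ≤ d) (hjT : j ∉ T) :
    ∃ s, ∀ j' ∈ T, c j' s ≠ c j s := by
  classical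
  have hcover : #(T.biUnion fun j' => {s | c j s = c j' s}) < #(univ : Finset σ) :=
    calc _ ≤ ∑ j' ∈ T, #{s | c j s = c j' s} := card_biUnion_le
      _ ≤ #T * D := sum_le_card_nsmul _ _ _ fun j' hj' =>
          hagree j j' fun h => hjT (h ▸ hj')
      _ ≤ d * D := Nat.mul_le_mul_right _ hT
      _ < _ := hdD
  obtain ⟨s, -, hs⟩ := exists_mem_notMem_of_card_lt_card hcover
  exact ⟨s, fun j' hj' h => hs (mem_biUnion.2 ⟨j', hj', by simp [h]⟩)⟩

def kautzSingleton {t N : ℕ} (c : Fin N → σ → α) (e : Fin t ≃ σ × α) :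
    Fin t → Fin N → Bool :=
  fun i j => decide (c j (e i).1 = (e i).2)

lemma disjunct_kautzSingleton {t N d D : ℕ} {c : Fin N → σ → α} (e : Fin t ≃ σ × α)
    (hagree : ∀ j j', j ≠ j' → #{s | c j s = c j' s} ≤ D) (hdD : d * D < Fintype.card σ) :
    Disjunct d (kautzSingleton c e) := by
  intro j T hT hjT
  obtain ⟨s, hs⟩ := exists_forall_ne_of_card_agree_le hagree hdD hT hjT
  exact ⟨e.symm (s, c j s), by simp [kautzSingleton],
    fun j' hj' => by simpa [kautzSingleton] using hs j' hj'⟩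

end KautzSingleton

lemma card_filter_eval_eq_lt {F σ : Type*} [Field F] [DecidableEq F] [Fintype σ] {v : σ → F}
    (hv : Function.Injective v) {m : ℕ} {f g : F[X]} (hf : f ∈ degreeLT F m)
    (hg : g ∈ degreeLT F m) (hfg : f ≠ g) : #{s | f.eval (v s) = g.eval (v s)} < m := by
  by_contra! h
  rw [mem_degreeLT] at hf hg
  have hm : (m : WithBot ℕ) ≤ #{s | f.eval (v s) = g.eval (v s)} := by exact_mod_cast h
  exact hfg <| eq_of_degrees_lt_of_eval_index_eq _ hv.injOn (hf.trans_le hm) (hg.trans_le hm)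
    fun s hs => (mem_filter.1 hs).2

theorem exists_disjunct_of_card_eq {F : Type*} [Field F] [Finite F] {d N m q t : ℕ}
    (hF : Nat.card F = q) (ht : t ≤ q) (hN : N ≤ q ^ m) (hdt : d * (m - 1) < t) :
    ∃ M : Fin (q * t) → Fin N → Bool, Disjunct d M := by
  classical
  have := Fintype.ofFinite F
  rw [Nat.card_eq_fintype_card] at hF
  obtain ⟨v⟩ : Nonempty (Fin t ↪ F) := Function.Embedding.nonempty_of_card_le (by simpa [hF])
  obtain ⟨p⟩ : Nonempty (Fin N ↪ (Fin m → F)) :=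
    Function.Embedding.nonempty_of_card_le (by simpa [hF])
  let e : Fin (q * t) ≃ Fin t × F := Fintype.equivOfCardEq (by simp [hF, mul_comm])
  let code : Fin N → degreeLT F m := fun j => (degreeLTEquiv F m).symm (p j)
  refine ⟨kautzSingleton (fun j s => (code j : F[X]).eval (v s)) e,
    disjunct_kautzSingleton (D := m - 1) e (fun j j' hjj' => ?_) (by simpa using hdt)⟩
  have := card_filter_eval_eq_lt v.injective (code j).2 (code j').2
    fun h => hjj' (p.injective ((degreeLTEquiv F m).symm.injective (Subtype.ext h)))
  omega

lemma two_mul_le_two_pow (k : ℕ) : 2 * k ≤ 2 ^ k := by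
  cases k with
  | zero => simp
  | succ k => rw [pow_succ']; have := Nat.lt_two_pow_self (n := k); omega

lemma le_pow_of_mul_log_le {d N q k m : ℕ} (hd : 0 < d) (hq : q = 2 ^ k) (hmd : q ≤ m * d + 2)
    (hlog : (d : ℝ) * log N / 2 ≤ ((q : ℝ) / 2) * log ((q : ℝ) / 2)) : N ≤ q ^ m := by
  have hlogq : log q = k * log 2 := by rw [hq, Nat.cast_pow, Nat.cast_ofNat, log_pow]
  have hlogq2 : log ((q : ℝ) / 2) = (k - 1) * log 2 := by
    rw [log_div (by simp [hq]) two_ne_zero, hlogq]; ring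
  have h2k : 2 * (k : ℝ) ≤ q := by exact_mod_cast hq ▸ two_mul_le_two_pow k
  have hmdR : (q : ℝ) ≤ m * d + 2 := by exact_mod_cast hmd
  have hlog2 : 0 < log 2 := log_pos one_lt_two
  have key : (d : ℝ) * log N ≤ d * log ((q : ℝ) ^ m) := by
    rw [log_pow, hlogq]
    calc (d : ℝ) * log N ≤ q * ((k - 1) * log 2) := by rw [← hlogq2]; linarith
      _ ≤ (q - 2) * k * log 2 := by nlinarith
      _ ≤ m * d * k * log 2 := by gcongr; linarith
      _ = d * (m * (k * log 2)) := by ring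
  have hq0 : (0 : ℝ) < q ^ m := by positivity [show 0 < q by simp [hq]]
  have : (N : ℝ) ≤ q ^ m := calc
    (N : ℝ) ≤ exp (log N) := le_exp_log _
    _ ≤ exp (log ((q : ℝ) ^ m)) := exp_le_exp.2 (le_of_mul_le_mul_left key (by exact_mod_cast hd))
    _ = q ^ m := exp_log hq0
  exact_mod_cast this

theorem stmt2_general (d N q : ℕ) (hd : 1 ≤ d) (hq : ∃ k : ℕ, q = 2 ^ k)
    (hq8 : 8 ≤ q)
    (hlog : (d : ℝ) * Real.log N / 2 ≤ ((q : ℝ) / 2) * Real.log ((q : ℝ) / 2)) :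
    ∃ M : Fin (q * (q - 1)) → Fin N → Bool, Disjunct d M := by
  obtain ⟨k, hk⟩ := hq
  have hk0 : k ≠ 0 := by rintro rfl; omega
  have := Fact.mk Nat.prime_two
  set m := (q - 2) / d + 1
  have hmd : q ≤ m * d + 2 := by
    have := Nat.lt_div_mul_add (a := q - 2) hd
    rw [add_mul, one_mul]; omega
  have hdm : d * (m - 1) < q - 1 := by
    have := Nat.div_mul_le_self (q - 2) d
    rw [Nat.add_sub_cancel, mul_comm]; omega
  exact exists_disjunct_of_card_eq (F := GaloisField 2 k) (by rw [GaloisField.card 2 k hk0, hk])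
    (Nat.sub_le q 1) (le_pow_of_mul_log_le hd hk hmd hlog) hdm

/-- Let `d ≥ 1`, `N ≥ 2` and let `q` be a power of two with
`q ≥ d + 2`, `q ≥ 8` and `(q/2)·ln(q/2) ≥ (d·ln N)/2`.  Then there exists a
`d`-disjunct binary matrix with `q(q-1)` rows and `N` columns. -/
theorem stmt2 (d N q : ℕ) (hd : 1 ≤ d) (hN : 2 ≤ N) (hq : ∃ k : ℕ, q = 2 ^ k)
    (hqd : d + 2 ≤ q) (hq8 : 8 ≤ q)
    (hlog : (d : ℝ) * Real.log N / 2 ≤ ((q : ℝ) / 2) * Real.log ((q : ℝ) / 2)) :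
    ∃ M : Fin (q * (q - 1)) → Fin N → Bool, Disjunct d M :=
  stmt2_general d N q hd hq hq8 hlog
end

section
/- Let q be a prime power, let d be an integer with 1 ≤ d ≤ q − 2, set r = ⌈(q−2)/d⌉, and let N be an integer with 1 ≤ N ≤ q^r. Then there exists a d-disjunct binary matrix with q(q−1) rows and N columns, namely the Kautz–Singleton concatenation of a [q−1, r]_q Reed–Solomon code (evaluations of polynomials of degree < r over the field with q elements at q−1 distinct points) with the q × q identity matrix, restricted to N of its columns. -/
open Polynomial Finset

/-!
Column `j` is the Reed–Solomon codeword `a ↦ f_j(pts a)` of the polynomial `f_j` with coefficient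
vector `σ j`, written in unary. Two distinct polynomials of degree `< r` agree in at most `r - 1`
of the `q - 1` evaluation points, so the columns in `T` agree with column `j` in at most
`d (r - 1) < q - 1` positions altogether, and at any other position `a` the row `(a, f_j(pts a))`
has a `1` in column `j` and `0` in every column of `T`.
-/

theorem Nat.mul_ceilDiv_sub_one_lt_succ (m d : ℕ) : d * (m ⌈/⌉ d - 1) < m + 1 := by
  rcases Nat.eq_zero_or_pos d with rfl | hd
  · simp
  by_contra! h
  have := (ceilDiv_le_iff_le_mul hd).2 (by omega : m ≤ d * (m ⌈/⌉ d - 1))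
  have : m ⌈/⌉ d = 0 := by omega
  simp_all

theorem exists_forall_ne_of_card_agree_le_s3 {ι κ α : Type*} [Fintype κ] [DecidableEq α]
    (c : ι → κ → α) {m : ℕ} (hc : ∀ i i', i ≠ i' → #{a | c i a = c i' a} ≤ m)
    {i : ι} {T : Finset ι} (hiT : i ∉ T) (hT : #T * m < Fintype.card κ) :
    ∃ a, ∀ i' ∈ T, c i a ≠ c i' a := by
  classical
  by_contra! h
  have hcover : (univ : Finset κ) ⊆ T.biUnion fun i' => {a | c i a = c i' a} := fun a _ => by
    obtain ⟨i', hi', hia⟩ := h a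
    exact mem_biUnion.2 ⟨i', hi', mem_filter.2 ⟨mem_univ a, hia⟩⟩
  have : Fintype.card κ ≤ #T * m :=
    calc Fintype.card κ ≤ #(T.biUnion fun i' => {a | c i a = c i' a}) := card_le_card hcover
      _ ≤ ∑ i' ∈ T, #{a | c i a = c i' a} := card_biUnion_le
      _ ≤ ∑ _i' ∈ T, m := sum_le_sum fun i' hi' => hc i i' (ne_of_mem_of_not_mem hi' hiT).symm
      _ = #T * m := by rw [sum_const, smul_eq_mul]
  omega

namespace Polynomial

theorem eval_ofFn {R : Type*} [CommSemiring R] [DecidableEq R] {n : ℕ} (v : Fin n → R) (x : R) :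
    (ofFn n v).eval x = ∑ k, v k * x ^ (k : ℕ) := by
  simp [ofFn_eq_sum_monomial, eval_finsetSum]

theorem card_eval_eq_lt_of_degree_lt {R κ : Type*} [CommRing R] [IsDomain R] [DecidableEq R]
    [Fintype κ] {v : κ → R} (hv : Function.Injective v) {f g : R[X]} (hfg : f ≠ g) {n : ℕ}
    (hf : f.degree < n) (hg : g.degree < n) : #{a | f.eval (v a) = g.eval (v a)} < n := by
  by_contra! h
  have hn : (n : WithBot ℕ) ≤ #{a | f.eval (v a) = g.eval (v a)} := by exact_mod_cast h
  exact hfg <| eq_of_degrees_lt_of_eval_index_eq _ hv.injOn (hf.trans_le hn) (hg.trans_le hn)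
    fun a ha => (mem_filter.1 ha).2

end Polynomial

theorem stmt3_general (q d N : ℕ) (hq : IsPrimePow q)
    (r : ℕ) (hr : r = (q - 2) ⌈/⌉ d)
    (F : Type) [Field F]
    (pts : Fin (q - 1) → F) (hpts : Function.Injective pts)
    (σ : Fin N → (Fin r → F)) (hσ : Function.Injective σ)
    (M : Fin (q - 1) × F → Fin N → Bool)
    (hM : ∀ p : Fin (q - 1) × F, ∀ j : Fin N,
      (M p j = true ↔ (∑ k : Fin r, σ j k * pts p.1 ^ (k : ℕ)) = p.2)) :
    ∀ j : Fin N, ∀ T : Finset (Fin N), T.card ≤ d → j ∉ T →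
      ∃ p : Fin (q - 1) × F, M p j = true ∧ ∀ j' ∈ T, M p j' = false := by
  classical
  intro j T hT hjT
  simp only [← eval_ofFn] at hM
  set c : Fin N → Fin (q - 1) → F := fun i a => (ofFn r (σ i)).eval (pts a)
  have hc : ∀ i i', i ≠ i' → #{a | c i a = c i' a} ≤ r - 1 := fun i i' h =>
    Nat.le_sub_one_of_lt <| card_eval_eq_lt_of_degree_lt hpts ((injective_ofFn r).ne (hσ.ne h))
      (ofFn_degree_lt _) (ofFn_degree_lt _)
  have hsize : #T * (r - 1) < Fintype.card (Fin (q - 1)) :=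
    calc #T * (r - 1) ≤ d * (r - 1) := Nat.mul_le_mul_right _ hT
      _ < q - 2 + 1 := hr ▸ Nat.mul_ceilDiv_sub_one_lt_succ (q - 2) d
      _ = Fintype.card (Fin (q - 1)) := by have := hq.two_le; rw [Fintype.card_fin]; omega
  obtain ⟨a, ha⟩ := exists_forall_ne_of_card_agree_le_s3 c hc hjT hsize
  refine ⟨(a, c j a), (hM _ _).2 rfl, fun j' hj' => ?_⟩
  rw [Bool.eq_false_iff, Ne, hM]
  exact (ha j' hj').symm

/-- Let `q` be a prime power, `1 ≤ d ≤ q - 2`, `r = ⌈(q-2)/d⌉`, and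
`1 ≤ N ≤ q^r`.  The Kautz–Singleton concatenation of a `[q-1, r]_q` Reed–Solomon code
(evaluations of polynomials of degree `< r` over a field `F` with `q` elements at
`q - 1` distinct points) with the `q × q` identity matrix, restricted to `N` of its
columns, is a `d`-disjunct binary matrix with `q(q-1)` rows and `N` columns.

Rows are indexed by pairs `(a, s) : Fin (q-1) × F` (position `a` of the outer codeword,
inner-code coordinate `s`); the entry of column `j` in row `(a, s)` is `1` iff the
polynomial with coefficient vector `σ j` evaluates to `s` at the point `pts a`.
`d`-disjunctness is stated explicitly. -/
theorem stmt3 (q d N : ℕ) (hd1 : 1 ≤ d) (hd2 : d ≤ q - 2) (hq : IsPrimePow q)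
    (r : ℕ) (hr : r = (q - 2) ⌈/⌉ d) (hN1 : 1 ≤ N) (hN2 : N ≤ q ^ r)
    (F : Type) [Field F] [Fintype F] (hF : Fintype.card F = q)
    (pts : Fin (q - 1) → F) (hpts : Function.Injective pts)
    (σ : Fin N → (Fin r → F)) (hσ : Function.Injective σ)
    (M : Fin (q - 1) × F → Fin N → Bool)
    (hM : ∀ p : Fin (q - 1) × F, ∀ j : Fin N,
      (M p j = true ↔ (∑ k : Fin r, σ j k * pts p.1 ^ (k : ℕ)) = p.2)) :
    ∀ j : Fin N, ∀ T : Finset (Fin N), T.card ≤ d → j ∉ T →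
      ∃ p : Fin (q - 1) × F, M p j = true ∧ ∀ j' ∈ T, M p j' = false :=
  stmt3_general q d N hq r hr F pts hpts σ hσ M hM
end

section
/- Let q ≥ 4 be an even integer and let d be an integer with 1 ≤ d ≤ q − 1. Then ⌈(q−1)/⌈(q−2)/d⌉⌉ − 1 ≥ ⌊d/2⌋ + 1. (This quantity d′ = ⌈(q−1)/⌈(q−2)/d⌉⌉ − 1 is the maximum number of defective items that the proposed q(q−1) × N nonrandom disjunct matrix, built from a [q−1, ⌈(q−2)/d⌉]_q Reed–Solomon code with alphabet size q a power of two, can be used to identify.) -/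
/-- Let `q ≥ 4` be an even integer and `1 ≤ d ≤ q - 1`.  Then
`⌈(q-1)/⌈(q-2)/d⌉⌉ - 1 ≥ ⌊d/2⌋ + 1`, where `⌈/⌉` is ceiling division and `/` on
naturals is floor division. -/
theorem stmt5 (q d : ℕ) (hq4 : 4 ≤ q) (hqe : Even q) (hd1 : 1 ≤ d) (hd2 : d ≤ q - 1) :
    d / 2 + 1 ≤ (q - 1) ⌈/⌉ ((q - 2) ⌈/⌉ d) - 1 := by
  rw [Nat.ceilDiv_eq_add_pred_div, Nat.ceilDiv_eq_add_pred_div]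
  obtain ⟨s, rfl⟩ : ∃ s, q = 2 * s + 4 := by
    obtain ⟨t, ht⟩ := hqe; exact ⟨t - 2, by omega⟩
  have hds : d ≤ 2 * s + 3 := by omega
  have hd0 : 0 < d := hd1
  obtain ⟨k, hk⟩ : ∃ k, (2 * s + 4 - 2 + d - 1) / d = k := ⟨_, rfl⟩
  obtain ⟨m, hm⟩ : ∃ m, d / 2 = m := ⟨_, rfl⟩
  rw [hk, hm]
  have hA : d * k ≤ 2 * s + 1 + d := by
    have h := Nat.div_mul_le_self (2 * s + 4 - 2 + d - 1) d
    rw [hk, Nat.mul_comm] at h; omega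
  have hB : 2 * s + 2 ≤ d * k := by
    have h1 : 2 * s + 4 - 2 + d - 1 < d * ((2 * s + 4 - 2 + d - 1) / d + 1) :=
      Nat.lt_mul_div_succ _ hd0
    rw [hk] at h1
    have h2 : d * (k + 1) = d * k + d := by ring
    omega
  have hk1 : 1 ≤ k := by nlinarith
  have hdm : d = 2 * m ∨ d = 2 * m + 1 := by omega
  have key : k * (m + 1) ≤ 2 * s + 2 := by
    rcases Nat.lt_or_ge k 2 with hk2 | hk2
    · have hk' : k = 1 := by omega
      subst hk'; omega
    · obtain ⟨k', rfl⟩ : ∃ k', k = k' + 2 := ⟨k - 2, by omega⟩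
      rcases hdm with h | h
      · have hm1 : 1 ≤ m := by omega
        obtain ⟨m', rfl⟩ : ∃ m', m = m' + 1 := ⟨m - 1, by omega⟩
        have h1 : (m' + 1) * (k' + 2) ≤ s + m' + 1 := by
          have : 2 * ((m' + 1) * (k' + 2)) ≤ 2 * s + 1 + 2 * (m' + 1) := by
            calc 2 * ((m' + 1) * (k' + 2)) = (2 * (m' + 1)) * (k' + 2) := by ring
            _ ≤ 2 * s + 1 + 2 * (m' + 1) := by rw [← h]; exact hA
          omega
        nlinarith
      · have h1 : (2 * m + 1) * (k' + 2) ≤ 2 * s + 1 + (2 * m + 1) := by rw [← h]; exact hA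
        nlinarith
  have h2 : (m + 2) * k ≤ 2 * s + 4 - 1 + k - 1 := by
    have hr : (m + 2) * k = k * (m + 1) + k := by ring
    omega
  have hfin := (Nat.le_div_iff_mul_le (by omega : 0 < k)).2 h2
  omega
end

section
/- Let n ≥ 1 be an integer and N = 2^n. Then: (i) every column of 𝒮 has Hamming weight exactly n; (ii) for every subset A ⊆ {1,…,N} with |A| ≥ 2, the coordinatewise OR ⋁_{j∈A} 𝒮_j has Hamming weight at least n + 1; and consequently (iii) for every A ⊆ {1,…,N}, the coordinatewise OR ⋁_{j∈A} 𝒮_j has Hamming weight exactly n if and only if |A| = 1. -/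
theorem Nat.exists_lt_testBit_ne_of_ne {a b n : ℕ} (ha : a < 2 ^ n) (hb : b < 2 ^ n)
    (hab : a ≠ b) : ∃ k < n, a.testBit k ≠ b.testBit k := by
  obtain ⟨k, hk⟩ := Nat.exists_testBit_ne_of_ne hab
  refine ⟨k, ?_, hk⟩
  by_contra! hnk
  have hpow : 2 ^ n ≤ 2 ^ k := Nat.pow_le_pow_right two_pos hnk
  exact hk ((Nat.testBit_lt_two_pow (ha.trans_le hpow)).trans
    (Nat.testBit_lt_two_pow (hb.trans_le hpow)).symm)

namespace Smat

variable {n : ℕ}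

def colSupport (n : ℕ) (j : Fin (2 ^ n)) : Finset (Fin (2 * n)) :=
  Finset.univ.filter fun i => Smat n i j = true

def orSupport (n : ℕ) (A : Finset (Fin (2 ^ n))) : Finset (Fin (2 * n)) :=
  Finset.univ.filter fun i => ∃ j ∈ A, Smat n i j = true

/-- The row of the `k`-th bit pair `(k, n + k)` at which column `j` has its `1`. -/
def onePos (j : Fin (2 ^ n)) (k : Fin n) : Fin (2 * n) :=
  if (j : ℕ).testBit k then ⟨k, by omega⟩ else ⟨n + k, by omega⟩

theorem onePos_val_mod (j : Fin (2 ^ n)) (k : Fin n) : (onePos j k : ℕ) % n = k := by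
  unfold onePos
  split_ifs <;> simp [Nat.mod_eq_of_lt k.isLt]

theorem onePos_injective (j : Fin (2 ^ n)) : Function.Injective (onePos j) := fun k k' h => by
  have := congrArg (fun i : Fin (2 * n) => (i : ℕ) % n) h
  simpa only [onePos_val_mod, Fin.val_inj] using this

theorem onePos_eq_true_iff (j j' : Fin (2 ^ n)) (k : Fin n) :
    Smat n (onePos j k) j' = true ↔ (j' : ℕ).testBit k = (j : ℕ).testBit k := by
  unfold onePos Smat
  cases (j : ℕ).testBit k <;> simp

theorem eq_true_iff_exists_onePos (i : Fin (2 * n)) (j : Fin (2 ^ n)) :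
    Smat n i j = true ↔ ∃ k, onePos j k = i := by
  refine ⟨fun h => ?_, fun ⟨k, hk⟩ => hk ▸ (onePos_eq_true_iff j j k).2 rfl⟩
  unfold Smat at h
  split_ifs at h with hi
  · exact ⟨⟨i, hi⟩, by simp [onePos, h]⟩
  · refine ⟨⟨i - n, by omega⟩, Fin.ext ?_⟩
    simp only [Bool.not_eq_true'] at h
    simp only [onePos, h, Bool.false_eq_true, if_false]
    omega

theorem colSupport_eq_image (j : Fin (2 ^ n)) :
    colSupport n j = Finset.univ.image (onePos j) := by
  ext i
  simp [colSupport, eq_true_iff_exists_onePos]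

theorem card_colSupport (j : Fin (2 ^ n)) : (colSupport n j).card = n := by
  rw [colSupport_eq_image, Finset.card_image_of_injective _ (onePos_injective j),
    Finset.card_univ, Fintype.card_fin]

theorem colSupport_subset_orSupport {A : Finset (Fin (2 ^ n))} {j : Fin (2 ^ n)} (hj : j ∈ A) :
    colSupport n j ⊆ orSupport n A := fun i hi => by
  simp only [colSupport, orSupport, Finset.mem_filter, Finset.mem_univ, true_and] at hi ⊢
  exact ⟨j, hj, hi⟩

@[simp]
theorem orSupport_empty : orSupport n ∅ = ∅ := by
  simp [orSupport]

@[simp]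
theorem orSupport_singleton (j : Fin (2 ^ n)) : orSupport n {j} = colSupport n j := by
  simp [orSupport, colSupport]

theorem succ_le_card_orSupport {A : Finset (Fin (2 ^ n))} (hA : 2 ≤ A.card) :
    n + 1 ≤ (orSupport n A).card := by
  obtain ⟨a, ha, b, hb, hab⟩ := Finset.one_lt_card.mp hA
  obtain ⟨k, hkn, hk⟩ :=
    Nat.exists_lt_testBit_ne_of_ne a.isLt b.isLt (Fin.val_injective.ne hab)
  have hnotin : onePos b ⟨k, hkn⟩ ∉ colSupport n a := by
    simpa [colSupport, onePos_eq_true_iff] using hk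
  have hin : onePos b ⟨k, hkn⟩ ∈ orSupport n A :=
    colSupport_subset_orSupport hb (by simp [colSupport, onePos_eq_true_iff])
  calc n + 1 = (insert (onePos b ⟨k, hkn⟩) (colSupport n a)).card := by
        rw [Finset.card_insert_of_notMem hnotin, card_colSupport]
    _ ≤ (orSupport n A).card :=
        Finset.card_le_card (Finset.insert_subset hin (colSupport_subset_orSupport ha))

end Smat

/-- For `N = 2^n`:
(i) every column of `𝒮` has Hamming weight exactly `n`;
(ii) for every set `A` of at least two column indices, the coordinatewise OR of the
columns `𝒮_j`, `j ∈ A`, has Hamming weight at least `n + 1`;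
(iii) consequently, for every set `A` of column indices, the coordinatewise OR of the
columns `𝒮_j`, `j ∈ A`, has Hamming weight exactly `n` iff `|A| = 1`. -/
theorem stmt8 (n : ℕ) (hn : 1 ≤ n) :
    (∀ j : Fin (2 ^ n),
      (Finset.univ.filter fun i : Fin (2 * n) => Smat n i j = true).card = n) ∧
    (∀ A : Finset (Fin (2 ^ n)), 2 ≤ A.card →
      n + 1 ≤ (Finset.univ.filter fun i : Fin (2 * n) =>
        ∃ j ∈ A, Smat n i j = true).card) ∧
    (∀ A : Finset (Fin (2 ^ n)),
      ((Finset.univ.filter fun i : Fin (2 * n) =>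
        ∃ j ∈ A, Smat n i j = true).card = n ↔ A.card = 1)) := by
  open Smat in
  refine ⟨card_colSupport, fun A hA => succ_le_card_orSupport hA, fun A => ?_⟩
  change (orSupport n A).card = n ↔ A.card = 1
  rcases Nat.lt_or_ge A.card 2 with hA | hA
  · obtain hA0 | hA1 : A.card = 0 ∨ A.card = 1 := by omega
    · rw [hA0, Finset.card_eq_zero.mp hA0, orSupport_empty, Finset.card_empty]
      exact iff_of_false (by omega) (by omega)
    · obtain ⟨j, rfl⟩ := Finset.card_eq_one.mp hA1
      simp [card_colSupport]
  · have := succ_le_card_orSupport hA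
    omega
end

section
/- Let d ≥ 2 be an integer and let ε and t be real numbers with 0 < ε ≤ d and t ≥ e·d·ln(d/ε). Then d·(1 − (1/d)·(1 − 1/d)^{d−1})^t ≤ ε. -/
/-!
Since `(1 + 1/(d-1))^(d-1) ≤ e`, the subtracted term `q = (1/d)(1 - 1/d)^(d-1)` is at least
`1/(e d)`. Then `(1 - q)^t ≤ exp (-q t) ≤ exp (-log (d/ε)) = ε/d`.
-/

open Real

lemma exp_neg_one_le_one_sub_one_div_pow_pred (n : ℕ) :
    exp (-1) ≤ (1 - 1 / (n : ℝ)) ^ (n - 1) := by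
  rcases n with _ | m
  · simp [exp_le_one_iff]
  rcases eq_or_ne m 0 with rfl | hm
  · simp [exp_le_one_iff]
  have hbase : 1 - 1 / ((m + 1 : ℕ) : ℝ) = (1 + (m : ℝ)⁻¹)⁻¹ := by
    push_cast
    field_simp
    ring
  rw [exp_neg, hbase, Nat.add_sub_cancel, inv_pow]
  exact inv_anti₀ (by positivity) one_add_inv_pow_le_exp

lemma one_sub_rpow_le_exp_neg_mul {q t : ℝ} (hq : q ≤ 1) (ht : 0 ≤ t) :
    (1 - q) ^ t ≤ exp (-(q * t)) := by
  calc (1 - q) ^ t ≤ exp (-q) ^ t := rpow_le_rpow (by linarith) (one_sub_le_exp_neg q) ht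
    _ = exp (-(q * t)) := by rw [← exp_mul, neg_mul]

lemma mul_one_sub_rpow_le_of_log_div_le {c q ε t : ℝ} (hc : 0 < c) (hε : 0 < ε) (hq : q ≤ 1)
    (ht : 0 ≤ t) (hqt : log (c / ε) ≤ q * t) : c * (1 - q) ^ t ≤ ε := by
  calc c * (1 - q) ^ t ≤ c * exp (-(q * t)) := by gcongr; exact one_sub_rpow_le_exp_neg_mul hq ht
    _ ≤ c * exp (-log (c / ε)) := by gcongr
    _ = ε := by rw [exp_neg, exp_log (by positivity), inv_div]; field_simp

/-- Let `d ≥ 2` be an integer and `ε, t` reals with `0 < ε ≤ d` and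
`t ≥ e·d·ln(d/ε)`.  Then `d·(1 - (1/d)·(1 - 1/d)^(d-1))^t ≤ ε`, where the outer power
is the real power. -/
theorem stmt13 (d : ℕ) (hd : 2 ≤ d) (ε t : ℝ) (hε : 0 < ε) (hεd : ε ≤ d)
    (ht : Real.exp 1 * d * Real.log (d / ε) ≤ t) :
    (d : ℝ) * (1 - (1 / (d : ℝ)) * (1 - 1 / (d : ℝ)) ^ (d - 1)) ^ t ≤ ε := by
  have hd0 : (0 : ℝ) < d := by positivity
  have hd_inv_le_one : 1 / (d : ℝ) ≤ 1 := by
    rw [div_le_one hd0]; exact_mod_cast (by omega : 1 ≤ d)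
  have hq_lower : (exp 1 * d)⁻¹ ≤ 1 / (d : ℝ) * (1 - 1 / (d : ℝ)) ^ (d - 1) := by
    rw [mul_inv, mul_comm, ← exp_neg, one_div]
    gcongr
    simpa using exp_neg_one_le_one_sub_one_div_pow_pred d
  have hq_upper : 1 / (d : ℝ) * (1 - 1 / (d : ℝ)) ^ (d - 1) ≤ 1 := by
    have h0 : 0 ≤ 1 - 1 / (d : ℝ) := by linarith
    exact mul_le_one₀ hd_inv_le_one (pow_nonneg h0 _)
      (pow_le_one₀ h0 (by linarith [one_div_pos.2 hd0]))
  have hlog : 0 ≤ log (d / ε) := log_nonneg ((one_le_div hε).2 hεd)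
  refine mul_one_sub_rpow_le_of_log_div_le hd0 hε hq_upper (le_trans (by positivity) ht) ?_
  calc log (d / ε) = (exp 1 * d)⁻¹ * (exp 1 * d * log (d / ε)) := by field_simp
    _ ≤ _ * t := by gcongr
end

section
/- Let d ≥ 2 and t ≥ 1 be integers and let ε be a real number with 0 < ε ≤ d and t ≥ e·d·ln(d/ε). Consider a random t × d binary matrix whose t·d entries are independent, each equal to 1 with probability 1/d and 0 with probability 1 − 1/d. Then with probability at least 1 − ε, for every column index j ∈ {1,…,d} there exists a row i such that the entry in position (i,j) is 1 and the entries in positions (i,j') are 0 for all j' ≠ j; in particular, with probability at least 1 − ε the d columns contain a d × d identity matrix. -/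
/-!
Row `i` isolates column `j` exactly when row `i` is the `j`-th unit vector, an event of
probability `q = d⁻¹ (1 - d⁻¹)^(d-1) ≥ 1 / (e d)`, independently over the `t` rows. By the union
bound over the columns, some column is not isolated with probability at most
`d (1 - q)^t ≤ d exp (-q t) ≤ ε`.
-/

open MeasureTheory ENNReal

theorem Real.exp_neg_one_le_one_sub_inv_pow (n : ℕ) :
    Real.exp (-1) ≤ (1 - (n : ℝ)⁻¹) ^ (n - 1) := by
  rcases Nat.eq_zero_or_pos n with rfl | hn
  · simp
  obtain ⟨m, rfl⟩ := Nat.exists_eq_add_of_le' hn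
  have key : (1 - ((m + 1 : ℕ) : ℝ)⁻¹) ^ m = ((1 + (m : ℝ)⁻¹) ^ m)⁻¹ := by
    rcases Nat.eq_zero_or_pos m with rfl | hm
    · simp
    have : (0 : ℝ) < m := by exact_mod_cast hm
    rw [← inv_pow]; congr 1; push_cast; field_simp; ring
  rw [Nat.add_sub_cancel, key, Real.exp_neg]
  exact inv_anti₀ (by positivity) Real.one_add_inv_pow_le_exp

theorem mul_one_sub_pow_le_of_log_div_le {a q ε : ℝ} (t : ℕ) (ha : 0 < a) (hε : 0 < ε)
    (hq : q ≤ 1) (h : Real.log (a / ε) ≤ q * t) : a * (1 - q) ^ t ≤ ε := by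
  calc a * (1 - q) ^ t ≤ a * Real.exp (-q) ^ t := by
        gcongr
        exact Real.one_sub_le_exp_neg q
    _ = a * Real.exp (-(q * t)) := by rw [← Real.exp_nat_mul]; ring_nf
    _ ≤ a * Real.exp (-Real.log (a / ε)) := by gcongr
    _ = ε := by rw [Real.exp_neg, Real.exp_log (by positivity)]; field_simp

theorem natCast_mul_one_sub_inv_mul_pow_le {d t : ℕ} (hd : 1 ≤ d) {ε : ℝ} (hε : 0 < ε)
    (ht : Real.exp 1 * d * Real.log (d / ε) ≤ t) :
    (d : ℝ) * (1 - (d : ℝ)⁻¹ * (1 - (d : ℝ)⁻¹) ^ (d - 1)) ^ t ≤ ε := by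
  have hd₀ : (0 : ℝ) < d := by exact_mod_cast hd
  have hinv : (d : ℝ)⁻¹ ≤ 1 := inv_le_one_of_one_le₀ (by exact_mod_cast hd)
  apply mul_one_sub_pow_le_of_log_div_le t hd₀ hε
  · have : 0 ≤ 1 - (d : ℝ)⁻¹ := sub_nonneg.2 hinv
    exact mul_le_one₀ hinv (pow_nonneg this _) (pow_le_one₀ this (by linarith [inv_pos.2 hd₀]))
  · calc Real.log (d / ε) ≤ t / (Real.exp 1 * d) := by
          rw [le_div_iff₀ (by positivity)]; linarith
      _ = (d : ℝ)⁻¹ * Real.exp (-1) * t := by rw [Real.exp_neg]; field_simp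
      _ ≤ (d : ℝ)⁻¹ * (1 - (d : ℝ)⁻¹) ^ (d - 1) * t := by
          gcongr
          exact Real.exp_neg_one_le_one_sub_inv_pow d

theorem one_sub_sum_le_pi_forall_exists_eq {α ι κ : Type*} [MeasurableSpace α]
    [MeasurableSingletonClass α] [Fintype ι] [Fintype κ] (ρ : Measure α) [IsProbabilityMeasure ρ]
    (g : ι → α) :
    1 - ∑ j, (1 - ρ {g j}) ^ Fintype.card κ ≤
      Measure.pi (fun _ : κ => ρ) {M | ∀ j, ∃ i, M i = g j} := by
  set μ := Measure.pi fun _ : κ => ρ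
  have hmiss : {M : κ → α | ∀ j, ∃ i, M i = g j}ᶜ = ⋃ j, Set.univ.pi fun _ => {g j}ᶜ := by
    ext M; simp
  have hmiss_le : μ {M | ∀ j, ∃ i, M i = g j}ᶜ ≤ ∑ j, (1 - ρ {g j}) ^ Fintype.card κ := by
    rw [hmiss]
    refine (measure_iUnion_fintype_le _ _).trans_eq (Finset.sum_congr rfl fun j _ => ?_)
    rw [Measure.pi_pi, prob_compl_eq_one_sub (measurableSet_singleton _), Finset.prod_const,
      Finset.card_univ]
  rw [tsub_le_iff_right]
  calc 1 = μ Set.univ := measure_univ.symm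
    _ ≤ μ {M | ∀ j, ∃ i, M i = g j} + μ {M | ∀ j, ∃ i, M i = g j}ᶜ := measure_univ_le_add_compl _
    _ ≤ _ := by gcongr

theorem eq_fun_decide_eq_iff {ι : Type*} [DecidableEq ι] (f : ι → Bool) (j : ι) :
    (f = fun j' => decide (j' = j)) ↔ f j = true ∧ ∀ j' ≠ j, f j' = false := by
  constructor
  · rintro rfl
    simp +contextual
  · rintro ⟨hj, hne⟩
    funext j'
    by_cases h : j' = j
    · simp [h, hj]
    · simp [h, hne j' h]

set_option linter.deprecated false in
theorem pi_bernoulli_singleton_decide_eq {ι : Type*} [Fintype ι] [DecidableEq ι] {p : NNReal}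
    (hp : p ≤ 1) (j : ι) :
    Measure.pi (fun _ : ι => (PMF.bernoulli p hp).toMeasure) {fun j' => decide (j' = j)} =
      ((p * (1 - p) ^ (Fintype.card ι - 1) : NNReal) : ℝ≥0∞) := by
  simp only [Measure.pi_singleton, PMF.toMeasure_apply_singleton _ _ (measurableSet_singleton _),
    PMF.bernoulli_apply]
  rw [← Finset.mul_prod_erase _ _ (Finset.mem_univ j), Finset.prod_congr rfl fun j' hj' => by
    rw [decide_eq_false (Finset.ne_of_mem_erase hj')]]
  simp [Finset.card_erase_of_mem]

/-- Let `d ≥ 2`, `t ≥ 1` be integers and `ε` a real with `0 < ε ≤ d`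
and `t ≥ e·d·ln(d/ε)`.  For a random `t × d` binary matrix with independent
Bernoulli(1/d) entries (the product measure of `t·d` copies of the Bernoulli(1/d)
distribution on `Bool`), with probability at least `1 - ε`, for every column `j` there
is a row `i` whose entry in column `j` is `1` and whose entries in all other columns
are `0`; in particular the `d` columns contain a `d × d` identity matrix. -/
theorem stmt15 (d t : ℕ) (hd : 2 ≤ d) (ε : ℝ) (hε : 0 < ε)
    (htb : Real.exp 1 * d * Real.log (d / ε) ≤ t)
    (μ : Measure (Fin t → Fin d → Bool))
    (hμ : μ = Measure.pi fun _ : Fin t => Measure.pi fun _ : Fin d =>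
      (PMF.bernoulli ((d : NNReal))⁻¹
        (by
          apply inv_le_one_of_one_le₀
          exact_mod_cast le_trans one_le_two hd)).toMeasure) :
    ENNReal.ofReal (1 - ε) ≤
      μ {M : Fin t → Fin d → Bool | ∀ j : Fin d, ∃ i : Fin t,
        M i j = true ∧ ∀ j' : Fin d, j' ≠ j → M i j' = false} := by
  have hd₁ : 1 ≤ d := by omega
  have hinv : (d : NNReal)⁻¹ ≤ 1 := inv_le_one_of_one_le₀ (by exact_mod_cast hd₁)
  set q : NNReal := (d : NNReal)⁻¹ * (1 - (d : NNReal)⁻¹) ^ (d - 1)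
  have hq : q ≤ 1 := mul_le_one₀ hinv zero_le (pow_le_one₀ zero_le tsub_le_self)
  have hfail : ((d * (1 - q) ^ t : NNReal) : ℝ) ≤ ε := by
    have := natCast_mul_one_sub_inv_mul_pow_le hd₁ hε htb
    push_cast [q, hq, hinv]
    exact this
  simp only [← eq_fun_decide_eq_iff, hμ]
  refine le_trans ?_ (one_sub_sum_le_pi_forall_exists_eq _ _)
  simp only [pi_bernoulli_singleton_decide_eq, Fintype.card_fin]
  calc ENNReal.ofReal (1 - ε) ≤ ENNReal.ofReal (1 - (d * (1 - q) ^ t : NNReal)) :=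
        ENNReal.ofReal_le_ofReal (by linarith)
    _ = 1 - ∑ _ : Fin d, (1 - (q : ℝ≥0∞)) ^ t := by
        rw [ENNReal.ofReal_sub _ NNReal.zero_le_coe, ENNReal.ofReal_one, ENNReal.ofReal_coe_nnreal,
          Finset.sum_const, Finset.card_univ, Fintype.card_fin, nsmul_eq_mul]
        push_cast [hq]
        rfl
end
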